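/- arXiv:math/0012235 — 3 statements merged into one kernel-verified Lean document; each statement's English description precedes it below -/
import Mathlib

section
/- Let G be a group and let Λ = Z[G]. Consider the Λ-module H ⊗_Z Z[G] where H = Z² carries the hyperbolic form B((a,b),(c,d)) = ad + bc, with G-valued intersection pairing λ(x⊗g, y⊗h) = B(x,y)·gh⁻¹ ∈ Z[G]. For g, h ∈ G, the element β = x⊗1 + y⊗g + z⊗h⁻¹ with x = (1,−1), y = (0,1), z = (−1,0) satisfies: (a) the augmentation-type image of β in H (summing the H-components) is x + y + z = 0; and (b) its self-intersection μ̄(β) = ∑_{i<j} B(vᵢ,vⱼ) gᵢgⱼ⁻¹ equals g + h − gh in Z[G]/⟨α − α⁻¹⟩. -/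
open scoped TensorProduct
noncomputable section

/-- `H₁(G; ℤ/2) ≅ Gᵃᵇ ⊗ ℤ/2`. -/
abbrev HoneZ2 (G : Type*) [Group G] : Type _ :=
  TensorProduct ℤ (Additive (Abelianization G)) (ZMod 2)

/-- The class of `g` in `Gᵃᵇ ⊗ ℤ/2`. -/
def ab2 {G : Type*} [Group G] (g : G) : HoneZ2 G :=
  Additive.ofMul (Abelianization.of g) ⊗ₜ[ℤ] (1 : ZMod 2)

/-- The ℤ-linear extension of `ab2` to the group ring `ℤ[G] = G →₀ ℤ`. -/
def grMap (G : Type*) [Group G] : (G →₀ ℤ) →+ HoneZ2 G :=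
  Finsupp.liftAddHom fun g => zmultiplesHom (HoneZ2 G) (ab2 g)

/-- The additive subgroup of `ℤ[G]` generated by all `α - α⁻¹` together with `ℤ·1`. -/
def relSub (G : Type*) [Group G] : AddSubgroup (G →₀ ℤ) :=
  AddSubgroup.closure
    ((Set.range fun α : G => Finsupp.single α 1 - Finsupp.single α⁻¹ 1) ∪
      {Finsupp.single (1 : G) 1})

/-- The hyperbolic symmetric bilinear form on `ℤ²`. -/
def hypB (p q : ℤ × ℤ) : ℤ := p.1 * q.2 + p.2 * q.1

/-- The additive subgroup of `ℤ[G]` generated by all `α - α⁻¹`. -/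
def conjSub (G : Type*) [Group G] : AddSubgroup (G →₀ ℤ) :=
  AddSubgroup.closure (Set.range fun α : G => Finsupp.single α 1 - Finsupp.single α⁻¹ 1)

set_option maxRecDepth 100000 in
theorem stmt7 {G : Type*} [Group G] (g h : G) :
    ∀ (v : Fin 3 → ℤ × ℤ) (gs : Fin 3 → G),
      v = ![(1, -1), (0, 1), (-1, 0)] → gs = ![1, g, h⁻¹] →
      (v 0 + v 1 + v 2 = 0) ∧
      (QuotientAddGroup.mk (s := conjSub G)
          (∑ i, ∑ j, if i < j then
            Finsupp.single (gs i * (gs j)⁻¹) (hypB (v i) (v j)) else 0) =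
        QuotientAddGroup.mk
          (Finsupp.single g 1 + Finsupp.single h 1 - Finsupp.single (g * h) 1)) := by
  rintro v gs rfl rfl
  constructor
  · decide
  · rw [QuotientAddGroup.eq]
    have hsum : (∑ i : Fin 3, ∑ j : Fin 3, if i < j then
        Finsupp.single ((![1, g, h⁻¹] : Fin 3 → G) i * ((![1, g, h⁻¹] : Fin 3 → G) j)⁻¹)
          (hypB ((![(1, -1), (0, 1), (-1, 0)] : Fin 3 → ℤ × ℤ) i)
            ((![(1, -1), (0, 1), (-1, 0)] : Fin 3 → ℤ × ℤ) j)) else (0 : G →₀ ℤ)) =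
        Finsupp.single g⁻¹ 1 + Finsupp.single h 1 - Finsupp.single (g * h) 1 := by
      simp only [Fin.sum_univ_three, Matrix.cons_val_zero, Matrix.cons_val_one,
        Matrix.head_cons, Matrix.cons_val_two, Matrix.tail_cons]
      norm_num [hypB, show ¬((0:Fin 3) < 0) from by decide, show (0:Fin 3) < 1 from by decide,
        show (0:Fin 3) < 2 from by decide, show ¬((1:Fin 3) < 0) from by decide,
        show ¬((1:Fin 3) < 1) from by decide, show (1:Fin 3) < 2 from by decide,
        show ¬((2:Fin 3) < 0) from by decide, show ¬((2:Fin 3) < 1) from by decide,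
        show ¬((2:Fin 3) < 2) from by decide, Finsupp.single_neg]
      abel
    rw [hsum]
    have key : -((Finsupp.single g⁻¹ 1 : G →₀ ℤ) + Finsupp.single h 1 - Finsupp.single (g * h) 1) +
        (Finsupp.single g 1 + Finsupp.single h 1 - Finsupp.single (g * h) 1) =
        -(Finsupp.single g⁻¹ 1 - Finsupp.single g 1) := by abel
    rw [key]
    exact neg_mem (AddSubgroup.subset_closure ⟨g⁻¹, by simp⟩)
end
end

section
/- Let G be a group, H = Z² with hyperbolic form B((a,b),(c,d)) = ad + bc. For g ∈ G and ε ∈ {−1, +1}, choose v ∈ H with B(v,v) = −2ε (e.g. v = (1, −ε)). Then the element β = v⊗1 − v⊗g ∈ H ⊗ Z[G] satisfies: (a) the sum of its H-components is 0, (b) its G-valued self-intersection λ(β,β) = ∑_{i,j} B(vᵢ,vⱼ) gᵢgⱼ⁻¹ equals −4ε + 2ε(g + g⁻¹), and (c) μ̄(β) ≡ 2εg modulo ⟨α − α⁻¹⟩ + Z·1. -/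
open scoped TensorProduct
noncomputable section

theorem stmt8 {G : Type*} [Group G] (g : G) (ε : ℤ) (hε : ε = 1 ∨ ε = -1) :
    ∀ (vs : Fin 2 → ℤ × ℤ) (gs : Fin 2 → G),
      vs = ![(1, -ε), -(1, -ε)] → gs = ![1, g] →
      -- the chosen vector has square -2ε
      hypB (1, -ε) (1, -ε) = -2 * ε ∧
      -- (a) the sum of the H-components of β is zero
      vs 0 + vs 1 = 0 ∧
      -- (b) the G-valued self-intersection λ(β,β) = -4ε·1 + 2ε(g + g⁻¹)
      (∑ i, ∑ j, Finsupp.single (gs i * (gs j)⁻¹) (hypB (vs i) (vs j))) =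
        Finsupp.single (1 : G) (-4 * ε) + Finsupp.single g (2 * ε) +
          Finsupp.single g⁻¹ (2 * ε) ∧
      -- (c) μ̄(β) ≡ 2εg modulo ⟨α - α⁻¹⟩ + ℤ·1
      (QuotientAddGroup.mk (s := relSub G)
          (∑ i, ∑ j, if i < j then
            Finsupp.single (gs i * (gs j)⁻¹) (hypB (vs i) (vs j)) else 0) =
        QuotientAddGroup.mk (Finsupp.single g (2 * ε))) := by
  intro vs gs hvs hgs
  subst hvs hgs
  have hv1 : hypB (1, -ε) (1, -ε) = -2 * ε := by simp only [hypB]; ring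
  have hv2 : hypB (1, -ε) (-(1, -ε)) = 2 * ε := by
    simp only [hypB, Prod.fst_neg, Prod.snd_neg]; ring
  have hv3 : hypB (-(1, -ε)) (1, -ε) = 2 * ε := by
    simp only [hypB, Prod.fst_neg, Prod.snd_neg]; ring
  have hv4 : hypB (-(1, -ε)) (-(1, -ε)) = -2 * ε := by
    simp only [hypB, Prod.fst_neg, Prod.snd_neg]; ring
  refine ⟨hv1, by simp, ?_, ?_⟩
  · simp only [Fin.sum_univ_two, Matrix.cons_val_zero, Matrix.cons_val_one, Matrix.head_cons,
      one_mul, mul_one, inv_one, mul_inv_cancel]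
    rw [hv1, hv2, hv3, hv4, show (-4 * ε : ℤ) = -2 * ε + -2 * ε by ring, Finsupp.single_add]
    abel
  · have hsum : (∑ i : Fin 2, ∑ j : Fin 2, if i < j then
        Finsupp.single ((![1, g] : Fin 2 → G) i * ((![1, g] : Fin 2 → G) j)⁻¹)
          (hypB ((![(1, -ε), -(1, -ε)] : Fin 2 → ℤ × ℤ) i)
            ((![(1, -ε), -(1, -ε)] : Fin 2 → ℤ × ℤ) j)) else 0) =
        Finsupp.single g⁻¹ (2 * ε) := by
      simp only [Fin.sum_univ_two]
      rw [if_neg (by decide), if_pos (by decide), if_neg (by decide), if_neg (by decide)]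
      simp only [Matrix.cons_val_zero, Matrix.cons_val_one, Matrix.head_cons, one_mul,
        zero_add, add_zero, hv2]
    rw [hsum, QuotientAddGroup.eq]
    have hkey : -Finsupp.single g⁻¹ (2 * ε) + Finsupp.single g (2 * ε) =
        (2 * ε) • (Finsupp.single g (1 : ℤ) - Finsupp.single g⁻¹ (1 : ℤ)) := by
      rw [smul_sub, Finsupp.smul_single, Finsupp.smul_single, smul_eq_mul, mul_one]
      abel
    rw [hkey]
    exact AddSubgroup.zsmul_mem _
      (AddSubgroup.subset_closure (Set.mem_union_left _ (Set.mem_range.mpr ⟨g, rfl⟩))) _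
end
end

section
/- Let G be a group and consider the composition μ_s : Z[G] → G^{ab} ⊗ Z/2 of the quotient map Z[G] → Z[G]/(⟨α − α⁻¹⟩ + Z·1) with the induced homomorphism R. If x ∈ Z[G] has μ_s(x) = 0, then there exist finitely many pairs (g₁,h₁), …, (g_m,h_m) in G × G such that x ≡ ∑ⱼ (gⱼ + hⱼ + gⱼhⱼ) mod (2Z[G] + Z·1 + ⟨α − α⁻¹⟩). -/
open scoped TensorProduct
noncomputable section

/-- The subgroup `2ℤ[G] + ℤ·1 + ⟨α - α⁻¹⟩` of the group ring. -/
def bigSub (G : Type*) [Group G] : AddSubgroup (G →₀ ℤ) :=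
  AddSubgroup.closure
    ((Set.range fun y : G →₀ ℤ => 2 • y) ∪
      (Set.range fun α : G => Finsupp.single α 1 - Finsupp.single α⁻¹ 1) ∪
      {Finsupp.single (1 : G) 1})

namespace Stmt9Aux
set_option linter.unusedSectionVars false

variable (G : Type*) [Group G]

/-- The set of boundary elements `g + h + gh`. -/
def bdrySet : Set (G →₀ ℤ) :=
  { f | ∃ g h : G, f = Finsupp.single g 1 + Finsupp.single h 1 + Finsupp.single (g * h) 1 }

/-- The big subgroup together with boundary elements. -/
def SG : AddSubgroup (G →₀ ℤ) :=
  AddSubgroup.closure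
    (((Set.range fun y : G →₀ ℤ => 2 • y) ∪
      (Set.range fun α : G => Finsupp.single α 1 - Finsupp.single α⁻¹ 1) ∪
      {Finsupp.single (1 : G) 1}) ∪ bdrySet G)

variable {G}

lemma two_smul_mem_bigSub (y : G →₀ ℤ) : 2 • y ∈ bigSub G :=
  AddSubgroup.subset_closure (Or.inl (Or.inl ⟨y, rfl⟩))

lemma bigSub_le_SG : bigSub G ≤ SG G :=
  AddSubgroup.closure_mono Set.subset_union_left

lemma two_smul_mem_SG (y : G →₀ ℤ) : 2 • y ∈ SG G :=
  bigSub_le_SG (two_smul_mem_bigSub y)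

lemma bdry_mem_SG (g h : G) :
    Finsupp.single g 1 + Finsupp.single h 1 + Finsupp.single (g * h) 1 ∈ SG G :=
  AddSubgroup.subset_closure (Or.inr ⟨g, h, rfl⟩)

lemma one_mem_SG : (Finsupp.single (1 : G) 1 : G →₀ ℤ) ∈ SG G :=
  AddSubgroup.subset_closure (Or.inl (Or.inr rfl))

abbrev M (G : Type*) [Group G] := (G →₀ ℤ) ⧸ SG G

lemma two_smul_eq_zsmul (y : G →₀ ℤ) : (2 : ℤ) • y = 2 • y := by
  ext w
  simp

lemma two_torsion (z : M G) : (2 : ℤ) • z = 0 := by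
  induction z using QuotientAddGroup.induction_on with
  | H y =>
    rw [← QuotientAddGroup.mk_zsmul, QuotientAddGroup.eq_zero_iff, two_smul_eq_zsmul]
    exact two_smul_mem_SG y

/-- `G → Multiplicative (M G)` -/
def f : G →* Multiplicative (M G) where
  toFun g := Multiplicative.ofAdd (QuotientAddGroup.mk (Finsupp.single g 1))
  map_one' := by
    apply congrArg Multiplicative.ofAdd
    rw [QuotientAddGroup.eq_zero_iff]
    exact one_mem_SG
  map_mul' g h := by
    apply congrArg Multiplicative.ofAdd
    show _ = QuotientAddGroup.mk _ + QuotientAddGroup.mk _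
    rw [← QuotientAddGroup.mk_add, QuotientAddGroup.eq_iff_sub_mem]
    have hmem := sub_mem (bdry_mem_SG g h)
      (two_smul_mem_SG (Finsupp.single g 1 + Finsupp.single h 1))
    convert hmem using 1
    rw [← two_smul_eq_zsmul]
    abel

def ψ : Additive (Abelianization G) →+ M G where
  toFun a := Multiplicative.toAdd (Abelianization.lift (f (G := G)) (Additive.toMul a))
  map_zero' := congrArg Multiplicative.toAdd (map_one (Abelianization.lift (f (G := G))))
  map_add' a b := congrArg Multiplicative.toAdd
    (map_mul (Abelianization.lift (f (G := G))) (Additive.toMul a) (Additive.toMul b))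

lemma ψ_of (g : G) : ψ (Additive.ofMul (Abelianization.of g)) =
    QuotientAddGroup.mk (Finsupp.single g 1) := by
  show Multiplicative.toAdd (Abelianization.lift (f (G := G)) (Abelianization.of g)) = _
  rw [Abelianization.lift_apply_of]
  rfl

lemma smul_congr {n m : ℤ} (h : (n : ZMod 2) = (m : ZMod 2)) (z : M G) :
    n • z = m • z := by
  have h0 : ((n - m : ℤ) : ZMod 2) = 0 := by push_cast [h]; ring
  have hdvd := (ZMod.intCast_zmod_eq_zero_iff_dvd _ 2).mp h0
  obtain ⟨k, hk⟩ : (2 : ℤ) ∣ n - m := by exact_mod_cast hdvd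
  have hn : n = m + 2 * k := by linarith
  rw [hn, add_zsmul, mul_zsmul, two_torsion, add_zero]

lemma cast_val (c : ZMod 2) : (((c.val : ℤ)) : ZMod 2) = c := by
  push_cast [ZMod.natCast_val, ZMod.cast_id]
  rfl

/-- the bilinear map -/
def L : Additive (Abelianization G) →ₗ[ℤ] ZMod 2 →ₗ[ℤ] M G where
  toFun a :=
    { toFun := fun c => ((c.val : ℤ)) • ψ a
      map_add' := fun c c' => by
        show (((c + c').val : ℤ)) • ψ a = ((c.val : ℤ)) • ψ a + ((c'.val : ℤ)) • ψ a
        rw [← add_zsmul]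
        exact smul_congr (by push_cast [ZMod.natCast_val, ZMod.cast_id]; ring) _
      map_smul' := fun n c => by
        show (((n • c).val : ℤ)) • ψ a = n • (((c.val : ℤ)) • ψ a)
        rw [← mul_zsmul]
        exact smul_congr (by rw [zsmul_eq_mul]; push_cast [ZMod.natCast_val, ZMod.cast_id]; ring) _ }
  map_add' a a' := by
    ext c
    show ((c.val : ℤ)) • ψ (a + a') = ((c.val : ℤ)) • ψ a + ((c.val : ℤ)) • ψ a'
    rw [map_add, zsmul_add]
  map_smul' n a := by
    ext c
    show ((c.val : ℤ)) • ψ (n • a) = n • (((c.val : ℤ)) • ψ a)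
    rw [map_zsmul, ← mul_zsmul, ← mul_zsmul', mul_comm]

def φ : HoneZ2 G →ₗ[ℤ] M G := TensorProduct.lift L

lemma φ_grMap (x : G →₀ ℤ) : φ (grMap G x) = QuotientAddGroup.mk x := by
  induction x using Finsupp.induction_linear with
  | zero => simp
  | add a b ha hb => rw [map_add, map_add, ha, hb, QuotientAddGroup.mk_add]
  | single g n =>
    have h1 : grMap G (Finsupp.single g n) = n • ab2 g := by
      rw [grMap, Finsupp.liftAddHom_apply_single]; rfl
    rw [h1, map_zsmul]
    have h2 : φ (ab2 g) = QuotientAddGroup.mk (Finsupp.single g 1) := by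
      show ((((1 : ZMod 2).val : ℤ)) • ψ (Additive.ofMul (Abelianization.of g)) : M G) = _
      rw [show (((1 : ZMod 2).val : ℤ)) = 1 from rfl, one_smul, ψ_of]
    rw [h2, ← QuotientAddGroup.mk_zsmul]
    congr 1
    rw [Finsupp.smul_single, smul_eq_mul, mul_one]

end Stmt9Aux

open Stmt9Aux

theorem stmt9 {G : Type*} [Group G] (x : G →₀ ℤ)
    (hx : grMap G x = 0) :
    ∃ (m : ℕ) (g h : Fin m → G),
      x - ∑ j, (Finsupp.single (g j) 1 + Finsupp.single (h j) 1 +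
        Finsupp.single (g j * h j) 1) ∈ bigSub G := by
  have hxS : x ∈ SG G := by
    rw [← QuotientAddGroup.eq_zero_iff, ← φ_grMap, hx, map_zero]
  clear hx
  induction hxS using AddSubgroup.closure_induction with
  | mem y hy =>
    rcases hy with hy | ⟨g, h, rfl⟩
    · exact ⟨0, Fin.elim0, Fin.elim0, by
        simp only [Finset.univ_eq_empty, Finset.sum_empty, sub_zero]
        exact AddSubgroup.subset_closure hy⟩
    · exact ⟨1, fun _ => g, fun _ => h, by
        simp only [Finset.univ_unique, Finset.sum_singleton, sub_self]
        exact zero_mem _⟩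
  | zero => exact ⟨0, Fin.elim0, Fin.elim0, by
      simp only [Finset.univ_eq_empty, Finset.sum_empty, sub_zero]
      exact zero_mem _⟩
  | add a b ha hb iha ihb =>
    obtain ⟨m, g, h, hm⟩ := iha
    obtain ⟨n, g', h', hn⟩ := ihb
    refine ⟨m + n, Fin.append g g', Fin.append h h', ?_⟩
    have hsum : ∑ j : Fin (m + n), (Finsupp.single (Fin.append g g' j) (1:ℤ) +
          Finsupp.single (Fin.append h h' j) 1 +
          Finsupp.single (Fin.append g g' j * Fin.append h h' j) 1)
        = (∑ j : Fin m, (Finsupp.single (g j) (1:ℤ) + Finsupp.single (h j) 1 +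
            Finsupp.single (g j * h j) 1)) +
          ∑ j : Fin n, (Finsupp.single (g' j) (1:ℤ) + Finsupp.single (h' j) 1 +
            Finsupp.single (g' j * h' j) 1) := by
      rw [Fin.sum_univ_add]
      congr 1 <;> (apply Finset.sum_congr rfl; intros j _; simp [Fin.append_left, Fin.append_right])
    rw [hsum, ← sub_add_sub_comm]
    exact add_mem hm hn
  | neg a ha iha =>
    obtain ⟨m, g, h, hm⟩ := iha
    refine ⟨m, g, h, ?_⟩
    have key : -a - ∑ j, (Finsupp.single (g j) (1:ℤ) + Finsupp.single (h j) 1 +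
          Finsupp.single (g j * h j) 1)
        = -(a - ∑ j, (Finsupp.single (g j) (1:ℤ) + Finsupp.single (h j) 1 +
          Finsupp.single (g j * h j) 1))
          - 2 • ∑ j, (Finsupp.single (g j) (1:ℤ) + Finsupp.single (h j) 1 +
          Finsupp.single (g j * h j) 1) := by
      ext w
      simp only [Finsupp.sub_apply, Finsupp.add_apply, Finsupp.neg_apply, Finsupp.smul_apply,
        smul_eq_mul]
      ring
    rw [key]
    exact sub_mem (neg_mem hm) (two_smul_mem_bigSub _)
end
end
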